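/- In the Heyting algebra L_QM (with relative pseudo-complement S₁ → S₂ = ⋁{S ∈ L_QM : S ∧ S₁ ≤ S₂} and negation ¬S := S → ⊥), the law of excluded middle S ∨ ¬S = ⊤ holds if and only if S = ⊤ or ¬S = ⊤ (equivalently S = ⊥). -/

import Mathlib

open scoped ENNReal

variable (H : Type*) [NormedAddCommGroup H] [InnerProductSpace ℂ H] [CompleteSpace H]

/-- An orthogonal projection on the Hilbert space `H`, i.e. an element of `L(ℋ)`. -/
def IsProj (P : H →L[ℂ] H) : Prop := IsIdempotentElem P ∧ IsSelfAdjoint P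

/-- The lattice order on projections: `P ≤ Q` iff `P * Q = P`. -/
def pleq (P Q : H →L[ℂ] H) : Prop := P * Q = P

/-- An abelian (commutative) von Neumann algebra. -/
def IsAbelianAlg (A : VonNeumannAlgebra H) : Prop :=
  ∀ x ∈ A, ∀ y ∈ A, x * y = y * x
/-- The collection `𝔄` of abelian von Neumann subalgebras of `B(H)`. -/
def AbAlg := {A : VonNeumannAlgebra H // IsAbelianAlg H A}
/-- The lattice `L_QM`: monotone functions `S : 𝔄 → L(ℋ)` with `S(𝒜) ∈ L(𝒜)`. -/
structure LQM where
  S : AbAlg H → (H →L[ℂ] H)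
  isProj : ∀ A : AbAlg H, IsProj H (S A)
  mem : ∀ A : AbAlg H, S A ∈ A.1
  mono : ∀ A B : AbAlg H, A.1 ≤ B.1 → pleq H (S A) (S B)

/-- `L_QM` carries the pointwise partial order. -/
instance : PartialOrder (LQM H) where
  le S₁ S₂ := ∀ A : AbAlg H, pleq H (S₁.S A) (S₂.S A)
  le_refl S A := (S.isProj A).1
  le_trans S₁ S₂ S₃ h12 h23 A := by
    show S₁.S A * S₃.S A = S₁.S A
    calc S₁.S A * S₃.S A = S₁.S A * S₂.S A * S₃.S A := by rw [h12 A]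
      _ = S₁.S A * (S₂.S A * S₃.S A) := mul_assoc _ _ _
      _ = S₁.S A := by rw [h23 A, h12 A]
  le_antisymm S₁ S₂ h12 h21 := by
    have hS : S₁.S = S₂.S := funext fun A => by
      have hc : S₁.S A * S₂.S A = S₂.S A * S₁.S A :=
        A.2 _ (S₁.mem A) _ (S₂.mem A)
      calc S₁.S A = S₁.S A * S₂.S A := (h12 A).symm
        _ = S₂.S A * S₁.S A := hc
        _ = S₂.S A := h21 A
    cases S₁; cases S₂; cases hS; rfl

theorem LQM.le_def (S₁ S₂ : LQM H) :
    S₁ ≤ S₂ ↔ ∀ A : AbAlg H, pleq H (S₁.S A) (S₂.S A) := Iff.rfl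
/-- The top element of `L_QM`: the constant function `𝒜 ↦ 1`. -/
def LQMtop : LQM H where
  S _ := 1
  isProj _ := ⟨by simp [IsIdempotentElem], by simp [IsSelfAdjoint]⟩
  mem A := one_mem A.1
  mono _ _ _ := one_mul 1
/-- The bottom element of `L_QM`: the constant function `𝒜 ↦ 0`. -/
def LQMbot : LQM H where
  S _ := 0
  isProj _ := ⟨by simp [IsIdempotentElem], by simp [IsSelfAdjoint]⟩
  mem A := zero_mem A.1
  mono _ _ _ := zero_mul 0

/-!
The centre of `B(H)` is `ℂ • 1`; as a von Neumann algebra it is abelian, contained in every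
`𝒜 ∈ 𝔄`, and its only projections are `0` and `1`. Hence, by monotonicity, an `S ∈ L_QM` with
`S(ℂ • 1) = 1` is `⊤`, and every other `S` lies below the element that is `0` at `ℂ • 1` and `1`
elsewhere. So for `H ≠ 0` the lattice `L_QM` has a unique coatom, and a supremum equals `⊤` only
if one of its members is `⊤`. For `S ∨ ¬S` this is the first claim; for
`¬S = ⋁ {T | T ∧ S = ⊥}` it says `¬S = ⊤` iff `⊤ ∧ S = S` is `⊥`.
-/

namespace VonNeumannAlgebra

variable {H}

noncomputable def scalars : VonNeumannAlgebra H where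
  toStarSubalgebra := StarSubalgebra.centralizer ℂ Set.univ
  centralizer_centralizer' := by
    show Set.centralizer (Set.centralizer (Set.centralizer (Set.univ ∪ star Set.univ))) = _
    rw [Set.centralizer_centralizer_centralizer]
    rfl

theorem mem_scalars_iff {z : H →L[ℂ] H} :
    z ∈ scalars (H := H) ↔ z ∈ Subalgebra.center ℂ (H →L[ℂ] H) := by
  show z ∈ StarSubalgebra.centralizer ℂ Set.univ ↔ _
  rw [StarSubalgebra.mem_centralizer_iff, Subalgebra.mem_center_iff]
  exact ⟨fun h g => (h g (Set.mem_univ g)).1, fun h g _ => ⟨h g, h (star g)⟩⟩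

theorem scalars_le (A : VonNeumannAlgebra H) : scalars ≤ A := fun z hz => by
  rw [← SetLike.mem_coe, ← A.centralizer_centralizer]
  exact fun g _ => Subalgebra.mem_center_iff.mp (mem_scalars_iff.mp hz) g

theorem eq_zero_or_eq_one_of_mem_scalars {p : H →L[ℂ] H} (hp : p ∈ scalars (H := H))
    (hidem : IsIdempotentElem p) : p = 0 ∨ p = 1 := by
  nontriviality H →L[ℂ] H
  obtain ⟨c, rfl⟩ := (Algebra.IsCentral.mem_center_iff ℂ).mp (mem_scalars_iff.mp hp)
  have hc : IsIdempotentElem c :=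
    (algebraMap ℂ (H →L[ℂ] H)).injective (by simpa [IsIdempotentElem] using hidem)
  rcases IsIdempotentElem.iff_eq_zero_or_one.mp hc with rfl | rfl <;> simp

end VonNeumannAlgebra

variable {H} in
noncomputable def AbAlg.scalars : AbAlg H :=
  ⟨VonNeumannAlgebra.scalars, fun _ _ _ hy =>
    Subalgebra.mem_center_iff.mp (VonNeumannAlgebra.mem_scalars_iff.mp hy) _⟩

namespace LQM

variable {H}

theorem le_top (S : LQM H) : S ≤ LQMtop H := fun _ => mul_one _

theorem eq_top_of_apply_eq_one {S : LQM H} {A : AbAlg H} (hA : S.S A = 1)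
    (hmin : ∀ B : AbAlg H, A.1 ≤ B.1) : S = LQMtop H := by
  refine le_antisymm S.le_top fun B => ?_
  have h := S.mono A B (hmin B)
  rw [pleq, hA, one_mul] at h
  exact (one_mul _).trans h

open Classical in
noncomputable def vanishingBelow (A₀ : AbAlg H) : LQM H where
  S B := if B.1 ≤ A₀.1 then 0 else 1
  isProj B := by
    split_ifs
    exacts [(LQMbot H).isProj B, (LQMtop H).isProj B]
  mem B := by
    split_ifs
    exacts [zero_mem B.1, one_mem B.1]
  mono B C hBC := by
    by_cases hC : C.1 ≤ A₀.1
    · simp [pleq, hBC.trans hC, hC]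
    · split_ifs <;> simp [pleq]

theorem le_vanishingBelow {S : LQM H} {A₀ : AbAlg H} (h : S.S A₀ = 0) :
    S ≤ vanishingBelow A₀ := fun B => by
  by_cases hB : B.1 ≤ A₀.1
  · have hmono := S.mono B A₀ hB
    rw [pleq, h, mul_zero] at hmono
    simp [pleq, vanishingBelow, hB, ← hmono]
  · simp [pleq, vanishingBelow, hB]

theorem vanishingBelow_ne_top [Nontrivial H] (A₀ : AbAlg H) : vanishingBelow A₀ ≠ LQMtop H :=
  fun h => zero_ne_one (α := H →L[ℂ] H) <| by
    simpa [vanishingBelow, LQMtop] using congrArg (fun S : LQM H => S.S A₀) h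

theorem eq_top_or_le_vanishingBelow_scalars (S : LQM H) :
    S = LQMtop H ∨ S ≤ vanishingBelow AbAlg.scalars := by
  rcases VonNeumannAlgebra.eq_zero_or_eq_one_of_mem_scalars (S.mem AbAlg.scalars)
    (S.isProj _).1 with h | h
  · exact Or.inr (le_vanishingBelow h)
  · exact Or.inl (eq_top_of_apply_eq_one h fun B => VonNeumannAlgebra.scalars_le B.1)

theorem isLUB_eq_top_iff [Nontrivial H] {s : Set (LQM H)} {N : LQM H} (hN : IsLUB s N) :
    N = LQMtop H ↔ LQMtop H ∈ s := by
  refine ⟨fun hN_top => ?_, fun h => le_antisymm N.le_top (hN.1 h)⟩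
  by_contra hs
  have hle : LQMtop H ≤ vanishingBelow AbAlg.scalars := hN_top ▸ hN.2 fun T hT =>
    (eq_top_or_le_vanishingBelow_scalars T).resolve_left fun h => hs (h ▸ hT)
  exact vanishingBelow_ne_top _ (le_antisymm (le_top _) hle)

theorem top_mem_pseudoComplement_iff (S : LQM H) :
    LQMtop H ∈ {T : LQM H | ∀ m : LQM H, IsGLB {T, S} m → m ≤ LQMbot H} ↔ S = LQMbot H := by
  refine ⟨fun h => le_antisymm (h S ?_) fun A => zero_mul _, fun h m hm => h ▸ hm.1 (by simp)⟩
  refine ⟨?_, fun m hm => hm (by simp)⟩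
  rintro T (rfl | rfl)
  exacts [S.le_top, le_rfl]

instance [Subsingleton H] : Subsingleton (LQM H) :=
  ⟨fun S T => le_antisymm (fun A => by simp [pleq, Subsingleton.elim (S.S A * T.S A) (S.S A)])
    (fun A => by simp [pleq, Subsingleton.elim (T.S A * S.S A) (T.S A)])⟩

end LQM

/-- In the Heyting algebra `L_QM` (with `¬S` the join of all `T` whose
meet with `S` is `⊥`), the law of excluded middle `S ⊔ ¬S = ⊤` holds if and only if
`S = ⊤` or `¬S = ⊤`; and `¬S = ⊤` iff `S = ⊥`. -/
theorem lqm_excluded_middle (S N : LQM H)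
    (hN : IsLUB {T : LQM H | ∀ m : LQM H, IsGLB {T, S} m → m ≤ LQMbot H} N)
    (J : LQM H) (hJ : IsLUB {S, N} J) :
    (J = LQMtop H ↔ (S = LQMtop H ∨ N = LQMtop H)) ∧
    (N = LQMtop H ↔ S = LQMbot H) := by
  rcases subsingleton_or_nontrivial H with _ | _
  · exact ⟨iff_of_true (Subsingleton.elim _ _) (Or.inl (Subsingleton.elim _ _)),
      iff_of_true (Subsingleton.elim _ _) (Subsingleton.elim _ _)⟩
  · refine ⟨(LQM.isLUB_eq_top_iff hJ).trans (or_congr eq_comm eq_comm),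
      (LQM.isLUB_eq_top_iff hN).trans (LQM.top_mem_pseudoComplement_iff S)⟩
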